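/- The PBW basis is orthogonal for the ı-form: for all m, n ≥ 0, ⟨Δₘ, Δₙ⟩ⁱ = δ_{m,n}/((1−q⁻²)(1−q⁻⁴)⋯(1−q⁻²ⁿ)). -/

import Mathlib

/-!
Setting: `K = ℚ(q)` is the field of rational functions over `ℚ`; `U⁻ = ℚ(q)[F]` and
`Uⁱ = ℚ(q)[B]` are both realized as `Polynomial K`, with `F` resp. `B` the variable
`Polynomial.X`.
-/

noncomputable section

abbrev K : Type := RatFunc ℚ

/-- The variable `q` of `ℚ(q)`. -/
def q : K := RatFunc.X

/-- The quantum integer `[n] = (qⁿ - q⁻ⁿ)/(q - q⁻¹)`. -/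
def qint (n : ℕ) : K := (q ^ n - q⁻¹ ^ n) / (q - q⁻¹)

/-- The quantum factorial `[n]! = [1][2]⋯[n]`, `[0]! = 1`. -/
def qfact : ℕ → K
  | 0 => 1
  | n + 1 => qfact n * qint (n + 1)

/-- The divided power `F⁽ⁿ⁾ = Fⁿ/[n]!` in `U⁻ = ℚ(q)[F]`. -/
def Fdiv (n : ℕ) : Polynomial K := Polynomial.C (qfact n)⁻¹ * Polynomial.X ^ n

/-- The value of `R` on the monomial `Fⁿ = [n]!·F⁽ⁿ⁾`: for `n ≥ 1` it is
`[n]!·(q^{n-1}/(1-q⁻²))·F⁽ⁿ⁻¹⁾`, which corresponds to `R(F⁽ⁿ⁾) = (q^{n-1}/(1-q⁻²))·F⁽ⁿ⁻¹⁾`,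
and `R(1) = 0`. -/
def Rval : ℕ → Polynomial K
  | 0 => 0
  | n + 1 => (qfact (n + 1) * (q ^ n / (1 - q⁻¹ ^ 2))) • Fdiv n

/-- `R : U⁻ → U⁻`, the unique `ℚ(q)`-linear map with `R(1) = 0` and
`R(F⁽ⁿ⁾) = (q^{n-1}/(1-q⁻²))·F⁽ⁿ⁻¹⁾` for `n ≥ 1`; it is defined by linear extension of
`Rval` from the basis of monomials `Fⁿ`. -/
def Rmap : Polynomial K →ₗ[K] Polynomial K :=
  (Polynomial.basisMonomials K).constr K Rval

/-- `j(Bⁿ)`, defined recursively via `j(1) = 1`, `j(B·u) = F·j(u) + R(j(u))`. -/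
def jval : ℕ → Polynomial K
  | 0 => 1
  | n + 1 => Polynomial.X * jval n + Rmap (jval n)

/-- `j : Uⁱ → U⁻`, the unique `ℚ(q)`-linear map with `j(1) = 1` and
`j(B·u) = F·j(u) + R(j(u))` for all `u ∈ Uⁱ`; it is defined by linear extension of `jval`
from the basis of monomials `Bⁿ`. -/
def jmap : Polynomial K →ₗ[K] Polynomial K :=
  (Polynomial.basisMonomials K).constr K jval

/-- `∏_{k=1}^{n} (1 - q^{-2k})`. -/
def lusztigDenom (n : ℕ) : K := ∏ k ∈ Finset.range n, (1 - q⁻¹ ^ (2 * (k + 1)))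

/-- Lusztig's form `(·,·)⁻` on `U⁻`: the symmetric `ℚ(q)`-bilinear form determined by
`(F⁽ᵐ⁾, F⁽ⁿ⁾)⁻ = δ_{m,n}/((1-q⁻²)(1-q⁻⁴)⋯(1-q⁻²ⁿ))`, i.e. on monomials
`(Fᵐ, Fⁿ)⁻ = δ_{m,n}·[n]!²/((1-q⁻²)⋯(1-q⁻²ⁿ))`, extended bilinearly via coefficients. -/
def formMinus (p r : Polynomial K) : K :=
  p.sum fun n a => a * r.coeff n * (qfact n ^ 2 / lusztigDenom n)

/-- The ı-form on `Uⁱ`: `⟨u₁, u₂⟩ⁱ := (j(u₁), j(u₂))⁻`. -/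
def iform (u₁ u₂ : Polynomial K) : K := formMinus (jmap u₁) (jmap u₂)

/-- The PBW basis elements `Δₙ ∈ Uⁱ`: `Δ₀ = 1` and
`[n+1]·Δ_{n+1} = B·Δₙ − (q^{n-1}/(1−q⁻²))·Δ_{n−1}` for `n ≥ 0`, interpreting `Δ₋₁ = 0`. -/
def Δel : ℕ → Polynomial K
  | 0 => 1
  | 1 => (qint 1)⁻¹ • (Polynomial.X : Polynomial K)
  | n + 2 => (qint (n + 2))⁻¹ •
      (Polynomial.X * Δel (n + 1) - (q ^ n / (1 - q⁻¹ ^ 2)) • Δel n)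

lemma q_ne_zero : q ≠ 0 := RatFunc.X_ne_zero

lemma q_pow_ne_one {m : ℕ} (hm : m ≠ 0) : q ^ m ≠ 1 := by
  intro h
  have h2 : (algebraMap (Polynomial ℚ) (RatFunc ℚ)) (Polynomial.X ^ m) =
      (algebraMap (Polynomial ℚ) (RatFunc ℚ)) 1 := by
    rw [map_pow, map_one, RatFunc.algebraMap_X]
    exact h
  have h3 := RatFunc.algebraMap_injective ℚ h2
  have hd := congrArg Polynomial.natDegree h3
  rw [Polynomial.natDegree_X_pow, Polynomial.natDegree_one] at hd
  exact hm hd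

lemma pow_sub_inv_pow_ne {n : ℕ} (hn : n ≠ 0) : q ^ n - q⁻¹ ^ n ≠ 0 := by
  intro h
  apply q_pow_ne_one (m := 2 * n) (by omega)
  have h1 : q ^ n = (q ^ n)⁻¹ := by rw [← inv_pow]; exact sub_eq_zero.mp h
  have h2 : q ^ n * (q ^ n)⁻¹ = 1 := mul_inv_cancel₀ (pow_ne_zero n q_ne_zero)
  rw [← h1] at h2
  rw [two_mul, pow_add]
  exact h2

lemma q_sub_inv_ne : q - q⁻¹ ≠ 0 := by
  have := pow_sub_inv_pow_ne (n := 1) one_ne_zero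
  simpa using this

lemma one_sub_qinv_pow_ne {m : ℕ} (hm : m ≠ 0) : 1 - q⁻¹ ^ m ≠ 0 := by
  rw [sub_ne_zero, inv_pow]
  intro h
  exact q_pow_ne_one hm (by rw [← inv_inv (q ^ m), ← h, inv_one])

lemma qint_ne_zero {n : ℕ} (hn : n ≠ 0) : qint n ≠ 0 :=
  div_ne_zero (pow_sub_inv_pow_ne hn) q_sub_inv_ne

lemma qfact_ne_zero (n : ℕ) : qfact n ≠ 0 := by
  induction n with
  | zero => simp [qfact]
  | succ k ih => exact mul_ne_zero ih (qint_ne_zero (Nat.succ_ne_zero k))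

lemma lusztigDenom_ne_zero (n : ℕ) : lusztigDenom n ≠ 0 :=
  Finset.prod_ne_zero_iff.mpr fun k _ => one_sub_qinv_pow_ne (by omega)

lemma qint_one : qint 1 = 1 := by
  simp only [qint, pow_one]
  exact div_self q_sub_inv_ne

lemma qfact_one : qfact 1 = 1 := by simp [qfact, qint_one]

-- basis evaluation lemmas

lemma Rmap_Xpow (n : ℕ) : Rmap (Polynomial.X ^ n) = Rval n := by
  have h := Module.Basis.constr_basis (Polynomial.basisMonomials K) K Rval n
  rw [Polynomial.coe_basisMonomials] at h
  rw [Polynomial.X_pow_eq_monomial]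
  exact h

lemma jmap_Xpow (n : ℕ) : jmap (Polynomial.X ^ n) = jval n := by
  have h := Module.Basis.constr_basis (Polynomial.basisMonomials K) K jval n
  rw [Polynomial.coe_basisMonomials] at h
  rw [Polynomial.X_pow_eq_monomial]
  exact h

lemma jmap_X_mul (p : Polynomial K) :
    jmap (Polynomial.X * p) = Polynomial.X * jmap p + Rmap (jmap p) := by
  have h : (jmap ∘ₗ LinearMap.mulLeft K (Polynomial.X : Polynomial K)) =
      (LinearMap.mulLeft K (Polynomial.X : Polynomial K)) ∘ₗ jmap + Rmap ∘ₗ jmap := by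
    apply (Polynomial.basisMonomials K).ext
    intro n
    simp only [Polynomial.coe_basisMonomials, LinearMap.comp_apply, LinearMap.add_apply,
      LinearMap.mulLeft_apply, ← Polynomial.X_pow_eq_monomial, jmap_Xpow]
    rw [← pow_succ', jmap_Xpow]
    rfl
  exact congrFun (congrArg (fun f => f.toFun) h) p

lemma Rmap_Fdiv_succ (n : ℕ) :
    Rmap (Fdiv (n + 1)) = (q ^ n / (1 - q⁻¹ ^ 2)) • Fdiv n := by
  rw [Fdiv, ← Polynomial.smul_eq_C_mul, map_smul, Rmap_Xpow]
  show (qfact (n+1))⁻¹ • ((qfact (n + 1) * (q ^ n / (1 - q⁻¹ ^ 2))) • Fdiv n) = _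
  rw [smul_smul, ← mul_assoc, inv_mul_cancel₀ (qfact_ne_zero (n+1)), one_mul]

lemma X_mul_Fdiv (n : ℕ) :
    Polynomial.X * Fdiv (n + 1) = qint (n + 2) • Fdiv (n + 2) := by
  simp only [Fdiv, ← Polynomial.smul_eq_C_mul, mul_smul_comm, smul_smul]
  rw [← pow_succ']
  congr 1
  have h : qfact (n + 2) = qfact (n + 1) * qint (n + 2) := rfl
  rw [h]
  field_simp [qfact_ne_zero, qint_ne_zero]


lemma jmap_Δel : ∀ n, jmap (Δel n) = Fdiv n := by
  intro n
  induction n using Nat.strong_induction_on with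
  | _ n ih =>
    match n with
    | 0 =>
        show jmap 1 = Fdiv 0
        rw [← pow_zero (Polynomial.X : Polynomial K), jmap_Xpow]
        simp [jval, Fdiv, qfact]
    | 1 =>
        show jmap ((qint 1)⁻¹ • Polynomial.X) = Fdiv 1
        rw [map_smul, ← pow_one (Polynomial.X : Polynomial K), jmap_Xpow, qint_one]
        have : jval 1 = Polynomial.X := by
          show Polynomial.X * jval 0 + Rmap (jval 0) = _
          show Polynomial.X * 1 + Rmap 1 = _
          rw [← pow_zero (Polynomial.X : Polynomial K), Rmap_Xpow]
          simp [Rval]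
        rw [this, Fdiv, qfact_one]
        simp
    | (k + 2) =>
        have ih1 : jmap (Δel (k + 1)) = Fdiv (k + 1) := ih (k + 1) (by omega)
        have ih0 : jmap (Δel k) = Fdiv k := ih k (by omega)
        show jmap ((qint (k + 2))⁻¹ •
          (Polynomial.X * Δel (k + 1) - (q ^ k / (1 - q⁻¹ ^ 2)) • Δel k)) = Fdiv (k + 2)
        rw [map_smul, map_sub, map_smul, jmap_X_mul, ih1, ih0, Rmap_Fdiv_succ]
        rw [X_mul_Fdiv]
        rw [add_sub_cancel_right, smul_smul,
          inv_mul_cancel₀ (qint_ne_zero (Nat.succ_ne_zero (k+1))), one_smul]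

lemma formMinus_Fdiv (m n : ℕ) :
    formMinus (Fdiv m) (Fdiv n) = if m = n then (lusztigDenom n)⁻¹ else 0 := by
  rw [formMinus, Fdiv, Fdiv, Polynomial.C_mul_X_pow_eq_monomial,
    Polynomial.C_mul_X_pow_eq_monomial, Polynomial.sum_monomial_index _ _ (by ring),
    Polynomial.coeff_monomial]
  by_cases h : m = n
  · subst h
    simp only [if_pos rfl, if_true]
    field_simp [qfact_ne_zero, lusztigDenom_ne_zero]
  · rw [if_neg (fun hh => h hh.symm), if_neg h]
    ring

/-- The PBW basis is orthogonal for the ı-form: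
`⟨Δₘ, Δₙ⟩ⁱ = δ_{m,n}/((1−q⁻²)(1−q⁻⁴)⋯(1−q⁻²ⁿ))`. -/
theorem stmt2 (m n : ℕ) :
    iform (Δel m) (Δel n) =
      if m = n then (∏ k ∈ Finset.range n, (1 - q⁻¹ ^ (2 * (k + 1))))⁻¹ else 0 := by
  rw [iform, jmap_Δel, jmap_Δel, formMinus_Fdiv]
  rfl

end
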